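/- arXiv:math/0503177 — 6 statements merged into one kernel-verified Lean document; each statement's English description precedes it below -/
import Mathlib

section
/- Suppose sequences of polynomials u'_n(q), v'_m(q), w'_{m,n}(q) satisfy the quadratic zero identity u'_n(q)·[m]_q + v'_m(q)·[n]_q + w'_{m,n}(q)·[m]_q·[n]_q = 0 for all positive integers m and n. Then there exist sequences of polynomials u_n(q) and v_m(q) such that u'_n(q) = u_n(q)·[n]_q, v'_m(q) = v_m(q)·[m]_q, and w'_{m,n}(q) = -(u_n(q) + v_m(q)) for all m, n. -/
open Polynomial Finset

noncomputable def qint (K : Type*) [Field K] (n : ℕ) : Polynomial K :=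
  ∑ i ∈ Finset.range n, X ^ i

lemma qint_one (K : Type*) [Field K] : qint K 1 = 1 := by
  simp [qint]

lemma qint_ne_zero (K : Type*) [Field K] {n : ℕ} (hn : 0 < n) : qint K n ≠ 0 := by
  intro hcon
  have : (qint K n).coeff 0 = 1 := by
    simp [qint, Polynomial.coeff_X_pow, Finset.sum_ite_eq', hn]
  rw [hcon] at this
  simp at this

theorem stmt3 (K : Type*) [Field K] (u' v' : ℕ → Polynomial K)
    (w' : ℕ → ℕ → Polynomial K)
    (h : ∀ m n : ℕ, 0 < m → 0 < n →
      u' n * qint K m + v' m * qint K n + w' m n * qint K m * qint K n = 0) :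
    ∃ u v : ℕ → Polynomial K, ∀ m n : ℕ, 0 < m → 0 < n →
      u' n = u n * qint K n ∧ v' m = v m * qint K m ∧
      w' m n = -(u n + v m) := by
  refine ⟨fun n => -(v' 1 + w' 1 n), fun m => -(u' 1 + w' m 1), ?_⟩
  intro m n hm hn
  have hu : ∀ n, 0 < n → u' n = -(v' 1 + w' 1 n) * qint K n := by
    intro n hn
    have := h 1 n one_pos hn
    rw [qint_one] at this
    ring_nf at this ⊢
    linear_combination this
  have hv : ∀ m, 0 < m → v' m = -(u' 1 + w' m 1) * qint K m := by
    intro m hm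
    have := h m 1 hm one_pos
    rw [qint_one] at this
    ring_nf at this ⊢
    linear_combination this
  refine ⟨hu n hn, hv m hm, ?_⟩
  have key := h m n hm hn
  rw [hu n hn, hv m hm] at key
  have : (w' m n + (-(v' 1 + w' 1 n) + -(u' 1 + w' m 1))) * (qint K m * qint K n) = 0 := by
    linear_combination key
  rcases mul_eq_zero.1 this with h1 | h2
  · linear_combination h1
  · exact absurd h2 (mul_ne_zero (qint_ne_zero K hm) (qint_ne_zero K hn))
end

section
/- Suppose sequences of polynomials u'_n(q) and v'_m(q) satisfy the linear zero identity u'_n(q)·[m]_q + v'_m(q)·[n]_q = 0 for all positive integers m and n. Then there exists a polynomial z(q) such that u'_n(q) = z(q)·[n]_q and v'_m(q) = -z(q)·[m]_q for all positive integers m and n. -/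
open Polynomial Finset

theorem stmt5 (K : Type*) [Field K] (u' v' : ℕ → Polynomial K)
    (h : ∀ m n : ℕ, 0 < m → 0 < n →
      u' n * qint K m + v' m * qint K n = 0) :
    ∃ z : Polynomial K, ∀ m n : ℕ, 0 < m → 0 < n →
      u' n = z * qint K n ∧ v' m = -z * qint K m := by
  have hq1 : qint K 1 = 1 := by simp [qint]
  refine ⟨-v' 1, fun m n hm hn => ?_⟩
  have h1 := h 1 n one_pos hn
  have h2 := h m 1 hm one_pos
  have h3 := h 1 1 one_pos one_pos
  rw [hq1] at h1 h2 h3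
  constructor
  · linear_combination h1
  · linear_combination h2 - qint K m * h3
end

section
/- Suppose sequences of polynomials r'_n(q), s'_m(q), t'_{m,n}(q) satisfy [m+n]_q = r'_n(q)·[m]_q + s'_m(q)·[n]_q + t'_{m,n}(q)·[m]_q·[n]_q for all positive integers m and n. Then there exist sequences of polynomials u_n(q) and v_m(q) such that r'_n(q) = u_n(q)·[n]_q + 1 - δ_n, s'_m(q) = v_m(q)·[m]_q + 1 - δ_m, and t'_{m,n}(q) = q - 1 - u_n(q) - v_m(q) + δ_m + δ_n for all m, n, where δ_k = 1 if k = 1 and 0 otherwise. -/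
open Polynomial Finset

lemma qint_add (K : Type*) [Field K] (m n : ℕ) :
    qint K (m + n) = qint K m + qint K n + (X - 1) * qint K m * qint K n := by
  have h1 : qint K (m + n) = qint K m + X ^ m * qint K n := by
    rw [qint, qint, qint, Finset.sum_range_add, Finset.mul_sum]
    congr 1
    exact Finset.sum_congr rfl fun i _ => by rw [pow_add]
  have h2 : (qint K m) * (X - 1) = X ^ m - 1 := geom_sum_mul X m
  rw [h1]
  linear_combination -qint K n * h2

theorem stmt10 (K : Type*) [Field K] (r' s' : ℕ → Polynomial K)
    (t' : ℕ → ℕ → Polynomial K)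
    (h : ∀ m n : ℕ, 0 < m → 0 < n →
      qint K (m + n) = r' n * qint K m + s' m * qint K n
        + t' m n * qint K m * qint K n) :
    ∃ u v : ℕ → Polynomial K, ∀ m n : ℕ, 0 < m → 0 < n →
      r' n = u n * qint K n + 1 - (if n = 1 then 1 else 0) ∧
      s' m = v m * qint K m + 1 - (if m = 1 then 1 else 0) ∧
      t' m n = X - 1 - u n - v m + (if m = 1 then 1 else 0)
        + (if n = 1 then 1 else 0) := by
  have key : ∀ m n : ℕ, 0 < m → 0 < n →
      (r' n - 1) * qint K m + (s' m - 1) * qint K n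
        + (t' m n - (X - 1)) * (qint K m * qint K n) = 0 := by
    intro m n hm hn
    have := h m n hm hn
    rw [qint_add] at this
    linear_combination -this
  refine ⟨fun n => if n = 1 then r' 1 else -((s' 1 - 1) + (t' 1 n - (X - 1))),
    fun m => if m = 1 then s' 1 else -((r' 1 - 1) + (t' m 1 - (X - 1))), ?_⟩
  intro m n hm hn
  have hr : ∀ n : ℕ, 0 < n → r' n =
      (if n = 1 then r' 1 else -((s' 1 - 1) + (t' 1 n - (X - 1)))) * qint K n
        + 1 - (if n = 1 then 1 else 0) := by
    intro n hn
    by_cases h1 : n = 1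
    · subst h1; simp [qint_one]
    · simp only [h1, if_neg, if_false]
      have := key 1 n one_pos hn
      rw [qint_one] at this
      linear_combination this
  have hs : ∀ m : ℕ, 0 < m → s' m =
      (if m = 1 then s' 1 else -((r' 1 - 1) + (t' m 1 - (X - 1)))) * qint K m
        + 1 - (if m = 1 then 1 else 0) := by
    intro m hm
    by_cases h1 : m = 1
    · subst h1; simp [qint_one]
    · simp only [h1, if_neg, if_false]
      have := key m 1 hm one_pos
      rw [qint_one] at this
      linear_combination this
  refine ⟨hr n hn, hs m hm, ?_⟩
  by_cases hn1 : n = 1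
  · subst hn1
    by_cases hm1 : m = 1
    · subst hm1
      have := key 1 1 one_pos one_pos
      rw [qint_one] at this
      simp only [reduceIte]
      linear_combination this
    · simp only [hm1, if_neg, if_false, reduceIte]
      ring
  · by_cases hm1 : m = 1
    · subst hm1
      simp only [hn1, if_neg, if_false, reduceIte]
      ring
    · simp only [hn1, hm1, if_neg, if_false]
      have hru : r' n - 1 = -((s' 1 - 1) + (t' 1 n - (X - 1))) * qint K n := by
        have := hr n hn
        simp only [hn1, if_neg, if_false] at this
        linear_combination this
      have hsv : s' m - 1 = -((r' 1 - 1) + (t' m 1 - (X - 1))) * qint K m := by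
        have := hs m hm
        simp only [hm1, if_neg, if_false] at this
        linear_combination this
      have hk := key m n hm hn
      have hmn : qint K m * qint K n ≠ 0 :=
        mul_ne_zero (qint_ne_zero K hm) (qint_ne_zero K hn)
      have hcan : -((s' 1 - 1) + (t' 1 n - (X - 1)))
          + -((r' 1 - 1) + (t' m 1 - (X - 1))) + (t' m n - (X - 1)) = 0 := by
        apply mul_left_cancel₀ hmn
        rw [mul_zero]
        linear_combination hk - qint K m * hru - qint K n * hsv
      linear_combination hcan
end

section
/- Suppose a sequence of polynomials f_n(q) satisfies f_{m+n}(q) = q^n·f_m(q) + q^m·f_n(q) + (1-q)·f_m(q)·f_n(q) for all positive integers m and n, with f_1(q) = h(q). Then for every n ≥ 1, (1-q)·f_n(q) = (q + (1-q)·h(q))^n - q^n. -/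
open Polynomial Finset

theorem stmt16 (K : Type*) [Field K] (h : Polynomial K) (f : ℕ → Polynomial K)
    (hf : ∀ m n : ℕ, 0 < m → 0 < n →
      f (m + n) = X ^ n * f m + X ^ m * f n + (1 - X) * f m * f n)
    (h1 : f 1 = h) :
    ∀ n : ℕ, 1 ≤ n → (1 - X) * f n = (X + (1 - X) * h) ^ n - X ^ n := by
  intro n hn
  induction n with
  | zero => omega
  | succ n ih =>
    rcases Nat.eq_or_lt_of_le hn with he | hl
    · rw [← he, pow_one, pow_one, h1]; ring
    · have hn1 : 1 ≤ n := by omega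
      have := hf n 1 (by omega) (by omega)
      rw [this, h1]
      have key := ih hn1
      have : (1 - X) * f n = (X + (1 - X) * h) ^ n - X ^ n := key
      calc (1 - X : Polynomial K) * (X ^ 1 * f n + X ^ n * h + (1 - X) * f n * h)
          = (X + (1 - X) * h) * ((1 - X) * f n) + X ^ n * (1 - X) * h := by ring
        _ = (X + (1 - X) * h) * ((X + (1 - X) * h) ^ n - X ^ n) + X ^ n * (1 - X) * h := by
            rw [key]
        _ = (X + (1 - X) * h) ^ (n + 1) - X ^ (n + 1) := by ring
end

section
/- Let f_n(q) be the sequence defined by f_1(q) = h(q) and the fundamental quadratic addition rule functional equation f_{m+n}(q) = (1-δ_n)·f_m(q) + (1-δ_m)·f_n(q) + (q-1+δ_m+δ_n)·f_m(q)·f_n(q). If such a sequence exists, then f_2(q) = (q+1)·h(q)^2 and, for n ≥ 3, f_n(q) = h(q) + q·h(q)^2 + q^2·h(q)^3 + ... + q^{n-3}·h(q)^{n-2} + (q^{n-2} + q^{n-1})·h(q)^n. -/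
open Polynomial Finset

theorem stmt17 (K : Type*) [Field K] (h : Polynomial K) (f : ℕ → Polynomial K)
    (hf : ∀ m n : ℕ, 0 < m → 0 < n →
      f (m + n) = (1 - if n = 1 then 1 else 0) * f m
        + (1 - if m = 1 then 1 else 0) * f n
        + (X - 1 + (if m = 1 then 1 else 0) + (if n = 1 then 1 else 0))
            * f m * f n)
    (h1 : f 1 = h) :
    f 2 = (X + 1) * h ^ 2 ∧
    ∀ n : ℕ, 3 ≤ n →
      f n = (∑ i ∈ Finset.range (n - 2), X ^ i * h ^ (i + 1))
        + (X ^ (n - 2) + X ^ (n - 1)) * h ^ n := by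
  have h2 : f 2 = (X + 1) * h ^ 2 := by
    have := hf 1 1 one_pos one_pos
    simp only [if_pos rfl, ite_true] at this
    rw [h1] at this
    rw [this]; ring
  refine ⟨h2, ?_⟩
  have hstep : ∀ n : ℕ, 2 ≤ n → f (n + 1) = h + X * h * f n := by
    intro n hn
    have hn1 : n ≠ 1 := by omega
    have := hf n 1 (by omega) one_pos
    simp only [if_pos rfl, ite_true, if_neg hn1] at this
    rw [h1] at this
    rw [this]; ring
  intro n hn
  induction n, hn using Nat.le_induction with
  | base =>
    rw [hstep 2 le_rfl, h2]
    simp [Finset.sum_range_one]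
    ring
  | succ n hn ih =>
    rw [hstep n (by omega), ih]
    obtain ⟨m, rfl⟩ : ∃ m, n = m + 2 := ⟨n - 2, by omega⟩
    simp only [Nat.add_sub_cancel, show m + 2 - 1 = m + 1 from rfl,
      show m + 2 + 1 - 2 = m + 1 from by omega, show m + 2 + 1 - 1 = m + 2 from rfl]
    rw [Finset.sum_range_succ', mul_add, Finset.mul_sum]
    have hs : ∑ i ∈ Finset.range m, X * h * (X ^ i * h ^ (i + 1))
        = ∑ i ∈ Finset.range m, X ^ (i + 1) * h ^ (i + 1 + 1) :=
      Finset.sum_congr rfl fun i _ => by ring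
    rw [hs]; ring
end

section
/- Suppose a sequence of polynomials f_n(q) satisfies the general quadratic functional equation f_{m+n} = (u_n·[n]_q + 1 - δ_n)·f_m + (v_m·[m]_q + 1 - δ_m)·f_n + (q - 1 - u_n - v_m + δ_m + δ_n)·f_m·f_n for all positive integers m, n, where u_n, v_m are given sequences of polynomials. Let h = f_1. Then f_2 = (u_1 + v_1)·h + (q + 1 - u_1 - v_1)·h^2, and h satisfies the cubic identity 0 = (u_2 - v_2 - u_1 + v_1)(q+1-u_1-v_1)·h^3 + ((u_2-v_2)(u_1+v_1) + (q+1)(u_1-v_1) - 2(u_1^2 - v_1^2))·h^2 + (u_1^2 - v_1^2 - (u_2-v_2)(q+1))·h. -/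
open Polynomial Finset

theorem stmt18 (K : Type*) [Field K] (u v f : ℕ → Polynomial K)
    (hf : ∀ m n : ℕ, 0 < m → 0 < n →
      f (m + n) = (u n * qint K n + 1 - if n = 1 then 1 else 0) * f m
        + (v m * qint K m + 1 - if m = 1 then 1 else 0) * f n
        + (X - 1 - u n - v m + (if m = 1 then 1 else 0)
            + (if n = 1 then 1 else 0)) * f m * f n)
    (h : Polynomial K) (h1 : f 1 = h) :
    f 2 = (u 1 + v 1) * h + (X + 1 - u 1 - v 1) * h ^ 2 ∧
    0 = (u 2 - v 2 - u 1 + v 1) * (X + 1 - u 1 - v 1) * h ^ 3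
      + ((u 2 - v 2) * (u 1 + v 1) + (X + 1) * (u 1 - v 1)
          - 2 * (u 1 ^ 2 - v 1 ^ 2)) * h ^ 2
      + (u 1 ^ 2 - v 1 ^ 2 - (u 2 - v 2) * (X + 1)) * h := by
  have q1 : qint K 1 = 1 := by simp [qint]
  have q2 : qint K 2 = 1 + X := by
    simp [qint, Finset.sum_range_succ]
  have e11 := hf 1 1 one_pos one_pos
  have e12 := hf 1 2 one_pos two_pos
  have e21 := hf 2 1 two_pos one_pos
  simp only [q1, q2, h1, if_pos rfl, if_neg (by norm_num : (2:ℕ) ≠ 1)] at e11 e12 e21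
  norm_num at e11 e12 e21
  have hf2 : f 2 = (u 1 + v 1) * h + (X + 1 - u 1 - v 1) * h ^ 2 := by
    rw [e11]; ring
  refine ⟨hf2, ?_⟩
  rw [hf2] at e12 e21
  linear_combination e21 - e12
end
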